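/- Let M ∈ ℝ^{n×d} and suppose S ∈ ℝ^{s×n} is a matrix satisfying (11/12)‖Mx‖_2 ≤ ‖SMx‖_2 ≤ (13/12)‖Mx‖_2 for all x ∈ ℝ^d. Fix B ∈ ℝ^{n×m} and suppose additionally that ‖SMX* − SB‖_F ≤ 49‖MX* − B‖_F, where X* = argmin_X ‖MX − B‖_F. Let X̃ be the minimizer of ‖SMX − SB‖_F over X ∈ ℝ^{d×m}. Then ‖MX̃ − B‖_F ≤ 99 · min_X ‖MX − B‖_F. -/
import Mathlib

open Matrix

noncomputable def vnorm2 {n : ℕ} (v : Fin n → ℝ) : ℝ :=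
  Real.sqrt (∑ i, (v i) ^ 2)

noncomputable def fnorm {n d : ℕ} (M : Matrix (Fin n) (Fin d) ℝ) : ℝ :=
  Real.sqrt (∑ i, ∑ j, (M i j) ^ 2)

lemma fnorm_nonneg' {n d : ℕ} (M : Matrix (Fin n) (Fin d) ℝ) : 0 ≤ fnorm M :=
  Real.sqrt_nonneg _

lemma fnorm_sq {n d : ℕ} (M : Matrix (Fin n) (Fin d) ℝ) :
    fnorm M ^ 2 = ∑ i, ∑ j, (M i j) ^ 2 :=
  Real.sq_sqrt (by positivity)

noncomputable def mip {n d : ℕ} (A B : Matrix (Fin n) (Fin d) ℝ) : ℝ :=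
  ∑ i, ∑ j, A i j * B i j

lemma mip_le {n d : ℕ} (A B : Matrix (Fin n) (Fin d) ℝ) :
    mip A B ≤ fnorm A * fnorm B := by
  have h := Finset.sum_mul_sq_le_sq_mul_sq Finset.univ
    (fun p : Fin n × Fin d => A p.1 p.2) (fun p => B p.1 p.2)

  have h1 : mip A B = ∑ p : Fin n × Fin d, A p.1 p.2 * B p.1 p.2 := by
    rw [mip, Fintype.sum_prod_type]
  have h2 : fnorm A = Real.sqrt (∑ p : Fin n × Fin d, (A p.1 p.2) ^ 2) := by
    rw [fnorm, Fintype.sum_prod_type]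
  have h3 : fnorm B = Real.sqrt (∑ p : Fin n × Fin d, (B p.1 p.2) ^ 2) := by
    rw [fnorm, Fintype.sum_prod_type]
  rw [h1, h2, h3, ← Real.sqrt_mul (by positivity)]
  calc ∑ p : Fin n × Fin d, A p.1 p.2 * B p.1 p.2
      ≤ |∑ p : Fin n × Fin d, A p.1 p.2 * B p.1 p.2| := le_abs_self _
    _ = Real.sqrt ((∑ p : Fin n × Fin d, A p.1 p.2 * B p.1 p.2) ^ 2) := (Real.sqrt_sq_eq_abs _).symm
    _ ≤ _ := Real.sqrt_le_sqrt h

lemma fnorm_triangle {n d : ℕ} (A B : Matrix (Fin n) (Fin d) ℝ) :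
    fnorm (A + B) ≤ fnorm A + fnorm B := by
  have key : fnorm (A + B) ^ 2 ≤ (fnorm A + fnorm B) ^ 2 := by
    rw [fnorm_sq]
    have : ∑ i, ∑ j, ((A + B) i j) ^ 2
        = (∑ i, ∑ j, (A i j)^2) + 2 * mip A B + ∑ i, ∑ j, (B i j)^2 := by
      simp only [Matrix.add_apply, mip, Finset.mul_sum, ← Finset.sum_add_distrib]
      congr 1; ext i; congr 1; ext j; ring
    rw [this, ← fnorm_sq, ← fnorm_sq]
    nlinarith [mip_le A B]
  have h2 : 0 ≤ fnorm A + fnorm B := add_nonneg (fnorm_nonneg' A) (fnorm_nonneg' B)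
  nlinarith [fnorm_nonneg' (A + B)]

lemma fnorm_sq_cols {n m : ℕ} (A : Matrix (Fin n) (Fin m) ℝ) :
    fnorm A ^ 2 = ∑ j, vnorm2 (fun i => A i j) ^ 2 := by
  rw [fnorm_sq, Finset.sum_comm]
  refine Finset.sum_congr rfl fun j _ => ?_
  rw [vnorm2, Real.sq_sqrt (by positivity)]

lemma emb_lower {n d s m : ℕ} (M : Matrix (Fin n) (Fin d) ℝ)
    (S : Matrix (Fin s) (Fin n) ℝ) (D : Matrix (Fin d) (Fin m) ℝ)
    (h : ∀ x, (11 / 12) * vnorm2 (M.mulVec x) ≤ vnorm2 ((S * M).mulVec x)) :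
    (11 / 12) * fnorm (M * D) ≤ fnorm (S * M * D) := by
  have hsq : ((11 / 12) * fnorm (M * D)) ^ 2 ≤ fnorm (S * M * D) ^ 2 := by
    rw [mul_pow, fnorm_sq_cols, fnorm_sq_cols, Finset.mul_sum]
    refine Finset.sum_le_sum fun j _ => ?_
    have h1 : (fun i => (M * D) i j) = M.mulVec (fun k => D k j) := by
      funext i; simp [Matrix.mul_apply, Matrix.mulVec, dotProduct]
    have h2 : (fun i => (S * M * D) i j) = (S * M).mulVec (fun k => D k j) := by
      funext i; simp [Matrix.mul_apply, Matrix.mulVec, dotProduct]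
    rw [h1, h2, ← mul_pow]
    exact pow_le_pow_left₀ (mul_nonneg (by norm_num) (Real.sqrt_nonneg _)) (h _) 2
  nlinarith [Real.sqrt_nonneg (∑ i, ∑ j, ((S * M * D) i j) ^ 2),
    Real.sqrt_nonneg (∑ i, ∑ j, ((M * D) i j) ^ 2),
    fnorm_nonneg' (M * D), fnorm_nonneg' (S * M * D)]

lemma fnorm_add_smul_sq {n m : ℕ} (P Q : Matrix (Fin n) (Fin m) ℝ) (t : ℝ) :
    fnorm (P + t • Q) ^ 2 = fnorm P ^ 2 + 2 * t * mip P Q + t ^ 2 * fnorm Q ^ 2 := by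
  rw [fnorm_sq, fnorm_sq, fnorm_sq, mip]
  simp only [Matrix.add_apply, Matrix.smul_apply, smul_eq_mul, Finset.mul_sum,
    ← Finset.sum_add_distrib]
  refine Finset.sum_congr rfl fun i _ => ?_
  refine Finset.sum_congr rfl fun j _ => ?_
  ring

lemma crit_zero (c q : ℝ) (hq : 0 ≤ q) (h : ∀ t : ℝ, 0 ≤ 2 * t * c + t ^ 2 * q) :
    c = 0 := by
  have h1 := h (-c / (q + 1))
  have hq1 : (0:ℝ) < q + 1 := by linarith
  have h2 : 0 ≤ (2 * (-c / (q + 1)) * c + (-c / (q + 1)) ^ 2 * q) * (q + 1) ^ 2 :=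
    mul_nonneg h1 (sq_nonneg _)
  have h3 : (2 * (-c / (q + 1)) * c + (-c / (q + 1)) ^ 2 * q) * (q + 1) ^ 2
      = -(c ^ 2) * (q + 2) := by
    field_simp; ring
  nlinarith [sq_nonneg c]

theorem stmt7 {n d s m : ℕ} (M : Matrix (Fin n) (Fin d) ℝ)
    (S : Matrix (Fin s) (Fin n) ℝ) (B : Matrix (Fin n) (Fin m) ℝ)
    (hemb : ∀ x : Fin d → ℝ,
      (11 / 12) * vnorm2 (M.mulVec x) ≤ vnorm2 ((S * M).mulVec x) ∧
      vnorm2 ((S * M).mulVec x) ≤ (13 / 12) * vnorm2 (M.mulVec x))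
    (Xstar : Matrix (Fin d) (Fin m) ℝ)
    (hXstar : ∀ X : Matrix (Fin d) (Fin m) ℝ,
      fnorm (M * Xstar - B) ≤ fnorm (M * X - B))
    (hS : fnorm (S * M * Xstar - S * B) ≤ 49 * fnorm (M * Xstar - B))
    (Xt : Matrix (Fin d) (Fin m) ℝ)
    (hXt : ∀ X : Matrix (Fin d) (Fin m) ℝ,
      fnorm (S * M * Xt - S * B) ≤ fnorm (S * M * X - S * B)) :
    fnorm (M * Xt - B) ≤ 99 * fnorm (M * Xstar - B) := by
  set R := fnorm (M * Xstar - B) with hRdef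
  have hR : 0 ≤ R := fnorm_nonneg' _
  set D := Xstar - Xt with hD
  set P := S * M * Xt - S * B with hP
  set Q := S * M * D with hQ
  have hmat : ∀ t : ℝ, S * M * (Xt + t • D) - S * B = P + t • Q := by
    intro t
    rw [hP, hQ, Matrix.mul_add, Matrix.mul_smul]
    abel
  have hexp : ∀ t : ℝ, fnorm (S * M * (Xt + t • D) - S * B) ^ 2
      = fnorm P ^ 2 + 2 * t * mip P Q + t ^ 2 * fnorm Q ^ 2 := fun t => by
    rw [hmat t, fnorm_add_smul_sq]
  have hmin : ∀ t : ℝ, 0 ≤ 2 * t * mip P Q + t ^ 2 * fnorm Q ^ 2 := by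
    intro t
    have h1 := hXt (Xt + t • D)
    have h2 : fnorm P ^ 2 ≤ fnorm (S * M * (Xt + t • D) - S * B) ^ 2 :=
      pow_le_pow_left₀ (fnorm_nonneg' _) h1 2
    rw [hexp t] at h2; linarith
  have hc : mip P Q = 0 := crit_zero _ _ (sq_nonneg _) hmin
  have hx1 : Xt + (1:ℝ) • D = Xstar := by rw [hD]; simp
  have h1 : fnorm (S * M * Xstar - S * B) ^ 2 = fnorm P ^ 2 + fnorm Q ^ 2 := by
    have h := hexp 1
    rw [hx1, hc] at h
    rw [h]; ring
  have hQle : fnorm Q ≤ 49 * R := by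
    have h3 : fnorm Q ^ 2 ≤ (49 * R) ^ 2 := by
      nlinarith [fnorm_nonneg' (S * M * Xstar - S * B), sq_nonneg (fnorm P)]
    nlinarith [fnorm_nonneg' Q, hR]
  have hMD : fnorm (M * D) ≤ 12 / 11 * (49 * R) := by
    have h4 := emb_lower M S D (fun x => (hemb x).1)
    rw [← hQ] at h4
    linarith
  have htri : fnorm (M * Xt - B) ≤ fnorm (M * D) + R := by
    have heq : M * Xt - B = -(M * D) + (M * Xstar - B) := by
      rw [hD, Matrix.mul_sub]; abel
    have h5 := fnorm_triangle (-(M * D)) (M * Xstar - B)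
    have hneg : fnorm (-(M * D)) = fnorm (M * D) := by
      simp [fnorm, Matrix.neg_apply]
    rw [heq]
    rw [hneg] at h5
    exact h5
  linarith
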